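/- arXiv:2308.02965 — 3 statements merged into one kernel-verified Lean document; each statement's English description precedes it below -/
import Mathlib

section
/- Let η₀ > 0 and let f = f₀ + f₁e₁ + f₂e₂ : Ω_{η₀} → 𝒜 be a continuously differentiable monogenic constant. Then: (i) f₀ is constant on Ω_{η₀}; (ii) ∂₀f₁ = ∂₀f₂ = 0 on Ω_{η₀}; and (iii) there exists a holomorphic function F on the annulus A(η₀) = {z ∈ ℂ : sinh η₀/(cosh η₀+1) < |z| < sinh η₀/(cosh η₀−1)} such that f₁(x) − i f₂(x) = F(x₁ + i x₂) for all x ∈ Ω_{η₀}. -/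
open MeasureTheory Filter Quaternion

noncomputable section

namespace Toro

/-- Points of ℝ³. -/
notation "ℝ³" => (Fin 3 → ℝ)

/-- The quaternion unit e₁. -/
def e1 : ℍ[ℝ] := ⟨0, 1, 0, 0⟩
/-- The quaternion unit e₂. -/
def e2 : ℍ[ℝ] := ⟨0, 0, 1, 0⟩
/-- The quaternion unit e₃. -/
def e3 : ℍ[ℝ] := ⟨0, 0, 0, 1⟩

/-- Partial derivative ∂ᵢ via the Fréchet derivative. -/
def pdf {E : Type*} [NormedAddCommGroup E] [NormedSpace ℝ E]
    (i : Fin 3) (f : ℝ³ → E) (x : ℝ³) : E :=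
  fderiv ℝ f x (Pi.single i 1)

/-- `HasPartialAt i h x v` : `h` has `i`-th partial derivative `v` at `x`. -/
def HasPartialAt (i : Fin 3) (h : ℝ³ → ℝ) (x : ℝ³) (v : ℝ) : Prop :=
  HasDerivAt (fun t => h (Function.update x i t)) v (x i)

/-- The generalized Cauchy-Riemann (Fueter) operator ∂̄f = ∂₀f + e₁∂₁f + e₂∂₂f. -/
def CRbar (f : ℝ³ → ℍ[ℝ]) (x : ℝ³) : ℍ[ℝ] :=
  pdf 0 f x + e1 * pdf 1 f x + e2 * pdf 2 f x

/-- The conjugate Cauchy-Riemann operator ∂f = ∂₀f − e₁∂₁f − e₂∂₂f. -/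
def CRconj (f : ℝ³ → ℍ[ℝ]) (x : ℝ³) : ℍ[ℝ] :=
  pdf 0 f x - e1 * pdf 1 f x - e2 * pdf 2 f x

/-- ∂h = ∂₀h − ∂₁h e₁ − ∂₂h e₂ for a real-valued h. -/
def gradQ (h : ℝ³ → ℝ) (x : ℝ³) : ℍ[ℝ] :=
  ⟨pdf 0 h x, -(pdf 1 h x), -(pdf 2 h x), 0⟩

/-- The point of ℝ³ with toroidal coordinates (η, θ, φ). -/
def torusCoords (η θ φ : ℝ) : ℝ³ :=
  ![Real.sin θ / (Real.cosh η - Real.cos θ),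
    Real.sinh η * Real.cos φ / (Real.cosh η - Real.cos θ),
    Real.sinh η * Real.sin φ / (Real.cosh η - Real.cos θ)]

/-- The solid torus Ω_{η₀} : points with toroidal coordinate η > η₀, together with
the core circle {x₀ = 0, x₁² + x₂² = 1}. -/
def torusDomain (η₀ : ℝ) : Set ℝ³ :=
  {x | ∃ η θ φ : ℝ, η₀ < η ∧ x = torusCoords η θ φ} ∪
    {x | x 0 = 0 ∧ (x 1) ^ 2 + (x 2) ^ 2 = 1}

/-- The set V = {x : x₁² + x₂² > 0} ∖ {x₀ = 0, x₁² + x₂² = 1}. -/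
def Vset : Set ℝ³ :=
  {x | 0 < (x 1) ^ 2 + (x 2) ^ 2} \ {x | x 0 = 0 ∧ (x 1) ^ 2 + (x 2) ^ 2 = 1}

/-- ρ = √(x₁² + x₂²). -/
def rhoOf (x : ℝ³) : ℝ := Real.sqrt ((x 1) ^ 2 + (x 2) ^ 2)

/-- Square of the distance from (ρ, x₀) to (−1, 0) in the meridian half-plane. -/
def d1sq (x : ℝ³) : ℝ := (rhoOf x + 1) ^ 2 + (x 0) ^ 2
/-- Square of the distance from (ρ, x₀) to (1, 0) in the meridian half-plane. -/
def d2sq (x : ℝ³) : ℝ := (rhoOf x - 1) ^ 2 + (x 0) ^ 2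

/-- cosh η, where η is the toroidal coordinate of x. -/
def coshEta (x : ℝ³) : ℝ :=
  (d1sq x + d2sq x) / (2 * Real.sqrt (d1sq x) * Real.sqrt (d2sq x))

/-- The toroidal coordinate θ ∈ [−π, π] of x (sign matching the sign of x₀). -/
def thetaOf (x : ℝ³) : ℝ :=
  (if x 0 < 0 then -1 else 1) *
    Real.arccos ((d1sq x + d2sq x - 4) / (2 * Real.sqrt (d1sq x) * Real.sqrt (d2sq x)))

/-- The toroidal coordinate φ ∈ (−π, π] of x. -/
def phiOf (x : ℝ³) : ℝ := Complex.arg ⟨x 1, x 2⟩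

/-- Φ_k^+(α) = cos kα (sign `true`), Φ_k^−(α) = sin kα (sign `false`). -/
def Phi (s : Bool) (k : ℕ) (α : ℝ) : ℝ :=
  if s then Real.cos (k * α) else Real.sin (k * α)

/-- Associated Legendre function of the second kind, real degree ν, integer order m. -/
def legendreQ (ν : ℝ) (m : ℕ) (t : ℝ) : ℝ :=
  ((-1 : ℝ) ^ m / (2 : ℝ) ^ (ν + 1)) * (Real.Gamma (ν + m + 1) / Real.Gamma (ν + 1)) *
    (t ^ 2 - 1) ^ ((m : ℝ) / 2) *
    ∫ s in (-1 : ℝ)..1, (1 - s ^ 2) ^ ν * (t - s) ^ (-(ν + m + 1))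

/-- The interior toroidal harmonic I_{n,m}^{ν,μ}. -/
def torI (n m : ℕ) (ν μ : Bool) (x : ℝ³) : ℝ :=
  Real.sqrt (coshEta x - Real.cos (thetaOf x)) *
    legendreQ ((n : ℝ) - 1 / 2) m (coshEta x) * Phi ν n (thetaOf x) * Phi μ m (phiOf x)

/-- J_m^+(x) = Re((x₁ + i x₂)^m). -/
def Jp (m : ℤ) (x : ℝ³) : ℝ := ((⟨x 1, x 2⟩ : ℂ) ^ m).re
/-- J_m^−(x) = Im((x₁ + i x₂)^m). -/
def Jm (m : ℤ) (x : ℝ³) : ℝ := ((⟨x 1, x 2⟩ : ℂ) ^ m).im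
/-- Ĵ(x) = −log |x₁ + i x₂|. -/
def Jhat (x : ℝ³) : ℝ := -Real.log (‖(⟨x 1, x 2⟩ : ℂ)‖)

/-- The basic monogenic constant W_m^+ = J_m^+ e₁ − J_m^− e₂. -/
def Wp (m : ℤ) (x : ℝ³) : ℍ[ℝ] := ⟨0, Jp m x, -(Jm m x), 0⟩
/-- The basic monogenic constant W_m^− = J_m^− e₁ + J_m^+ e₂. -/
def Wn (m : ℤ) (x : ℝ³) : ℍ[ℝ] := ⟨0, Jm m x, Jp m x, 0⟩

/-- The 1-form ω_f associated to an 𝒜-valued f. -/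
def omegaF (f : ℝ³ → ℍ[ℝ]) (x v : ℝ³) : ℝ :=
  (f x).re * v 0 - (f x).imI * v 1 - (f x).imJ * v 2

/-- The unit circle γ(t) = (0, cos t, sin t). -/
def circ (t : ℝ) : ℝ³ := ![0, Real.cos t, Real.sin t]

/-- The cohomology coefficient coh f = (1/2π) ∫ ω_f along the unit circle. -/
def cohOp (f : ℝ³ → ℍ[ℝ]) : ℝ :=
  (1 / (2 * Real.pi)) * ∫ t in (0 : ℝ)..(2 * Real.pi), omegaF f (circ t) (deriv circ t)

/-- The coefficients κ^n_{k,m}. -/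
def kap (n k m : ℕ) : ℝ :=
  if n = 0 then
    (if k = 1 then (if m = 0 then -(1 / 2 : ℝ) else (2 * (m : ℝ) - 1) / 2) else 0)
  else if k + 1 = n then -((2 * (n : ℝ) + 2 * (m : ℝ) - 1) / 4)
  else if k = n then (n : ℝ)
  else if k = n + 1 then -((2 * (n : ℝ) - 2 * (m : ℝ) + 1) / 4)
  else 0

/-- The change-of-basis coefficients i*^n_{k,m}. -/
def istar : ℕ → ℕ → ℕ → ℝ
  | 0, k, _ => if k = 0 then 1 else 0
  | (n + 1), k, m =>
    if k = n + 1 then 1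
    else (1 / kap n (n + 1) m) * ∑ j ∈ Finset.Icc (k - 1) n, kap j k m * istar n j m

/-- The inverse change-of-basis coefficients i^n_{k,m} (arguments: n, m, k). -/
def icoef (n m k : ℕ) : ℝ :=
  if k = n then 1
  else if k < n then
    -∑ j ∈ (Finset.Icc (k + 1) n).attach, istar j.1 k m * icoef n m j.1
  else 0
termination_by n - k
decreasing_by
  have hj := j.2
  simp only [Finset.mem_Icc] at hj
  omega

/-- The reverse-Appell toroidal harmonic I*_{n,m}^{ν,μ}. -/
def IstarH (n m : ℕ) (ν μ : Bool) (x : ℝ³) : ℝ :=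
  ∑ k ∈ Finset.range (n + 1), istar n k m * torI k m ν μ x

/-- The exact basic toroidal monogenic T_{n,m}^{ν,μ} = ∂I*_{n−1,m}^{−ν,μ} (for n ≥ 1). -/
def Tmono (n m : ℕ) (ν μ : Bool) (x : ℝ³) : ℍ[ℝ] :=
  gradQ (IstarH (n - 1) m (!ν) μ) x

/-- The annulus D = {z : sinh η₀/(cosh η₀ + 1) < |z| < sinh η₀/(cosh η₀ − 1)}. -/
def annulusD (η₀ : ℝ) : Set ℂ :=
  {z | Real.sinh η₀ / (Real.cosh η₀ + 1) < ‖z‖ ∧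
       ‖z‖ < Real.sinh η₀ / (Real.cosh η₀ - 1)}

/-- The Teodorescu operator 𝒯_D g (w) = −(1/π) ∬_D g(z)/(z−w) dA(z). -/
def teodorescu (D : Set ℂ) (g : ℂ → ℂ) (w : ℂ) : ℂ :=
  -(1 / (Real.pi : ℂ)) * ∫ z in D, g z / (z - w)

/-- The operator Ψ producing an 𝒜-valued monogenic function with scalar part h. -/
def PsiOp (η₀ : ℝ) (h : ℝ³ → ℝ) (x : ℝ³) : ℍ[ℝ] :=
  ⟨h x,
   -(∫ t in (0 : ℝ)..(x 0), pdf 1 h ![t, x 1, x 2]) +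
     (1 / 2) * (teodorescu (annulusD η₀) (fun z => ((pdf 0 h ![0, z.re, z.im] : ℝ) : ℂ)) ⟨x 1, x 2⟩).re,
   -(∫ t in (0 : ℝ)..(x 0), pdf 2 h ![t, x 1, x 2]) -
     (1 / 2) * (teodorescu (annulusD η₀) (fun z => ((pdf 0 h ![0, z.re, z.im] : ℝ) : ℂ)) ⟨x 1, x 2⟩).im,
   0⟩

/-- The basic toroidal monogenic of index n = 0 :
T_{0,m}^{+,μ} = Ψ[I_{0,m}^{+,μ}] − (coh Ψ[I_{0,m}^{+,μ}]) W_{−1}^−. -/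
def T0mono (η₀ : ℝ) (m : ℕ) (μ : Bool) (x : ℝ³) : ℍ[ℝ] :=
  PsiOp η₀ (torI 0 m true μ) x - cohOp (PsiOp η₀ (torI 0 m true μ)) • Wn (-1) x

/-- Membership in M(𝒜): 𝒜-valued, monogenic, square-integrable on Ω_{η₀}. -/
def MemMA (η₀ : ℝ) (f : ℝ³ → ℍ[ℝ]) : Prop :=
  (∀ x ∈ torusDomain η₀, DifferentiableAt ℝ f x) ∧
  (∀ x ∈ torusDomain η₀, (f x).imK = 0) ∧
  (∀ x ∈ torusDomain η₀, CRbar f x = 0) ∧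
  IntegrableOn (fun x => ‖f x‖ ^ 2) (torusDomain η₀)

/-- Membership in M(ℍ): ℍ-valued, monogenic, square-integrable on Ω_{η₀}. -/
def MemMH (η₀ : ℝ) (f : ℝ³ → ℍ[ℝ]) : Prop :=
  (∀ x ∈ torusDomain η₀, DifferentiableAt ℝ f x) ∧
  (∀ x ∈ torusDomain η₀, CRbar f x = 0) ∧
  IntegrableOn (fun x => ‖f x‖ ^ 2) (torusDomain η₀)

/-- The Laplacian Δh = ∂₀²h + ∂₁²h + ∂₂²h. -/
def laplacian (h : ℝ³ → ℝ) (x : ℝ³) : ℝ :=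
  pdf 0 (pdf 0 h) x + pdf 1 (pdf 1 h) x + pdf 2 (pdf 2 h) x

/-- Membership in Har(Ω_{η₀}): real-valued, C², harmonic, square-integrable. -/
def MemHar (η₀ : ℝ) (h : ℝ³ → ℝ) : Prop :=
  (∀ x ∈ torusDomain η₀, ContDiffAt ℝ 2 h x) ∧
  (∀ x ∈ torusDomain η₀, laplacian h x = 0) ∧
  IntegrableOn (fun x => (h x) ^ 2) (torusDomain η₀)

/-- The coefficients j_{n,m}^± (sign `s`, row `n`, integer `m`). -/
def jcoef (s : Bool) (n : ℕ) (m : ℤ) : ℝ :=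
  if 0 ≤ m then
    (1 + if n = 0 then 1 else 0) * (-1 : ℝ) ^ m * Real.sqrt (2 / Real.pi) /
      Real.Gamma ((m : ℝ) + 1 / 2)
  else
    (if s then 1 else -1) * 2 * (-1 : ℝ) ^ m * Real.sqrt (2 / Real.pi) *
      (1 / Real.Gamma ((m : ℝ) + 1 / 2)) *
      (Real.Gamma ((n : ℝ) + (m : ℝ) + 1 / 2) / Real.Gamma ((n : ℝ) - (m : ℝ) + 1 / 2))

/-!
Adding and subtracting `∂̄f = 0` and `∂f = 0` gives `∂₀f = 0` and `e₁ ∂₁f + e₂ ∂₂f = 0`. As `f₃`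
vanishes on the open set `Ω_{η₀}`, so do its partial derivatives, and the four components of the
second equation say that `∂₁f₀ = ∂₂f₀ = 0` and that `f₁ - i f₂` satisfies the Cauchy–Riemann
equations in `x₁ + i x₂`. Hence `f₀` is constant on the connected open set `Ω_{η₀}`, and
`f₁ - i f₂`, being independent of `x₀`, is the restriction of a function holomorphic on the
equatorial slice `x₀ = 0` of `Ω_{η₀}`, which contains the annulus.

For the geometry, write `ζ = ρ + i x₀` (with `ρ = |x₁ + i x₂|`) for the position of `x` in its
meridian half-plane. Toroidal coordinates are `e^{η - iθ} = (ζ + 1)/(ζ - 1)`, so `Ω_{η₀}` is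
`{e^{2η₀} |ζ - 1|² < |ζ + 1|²}`. This inequality is concave in `(x₀, ρ)`, so the segment from any
point of `Ω_{η₀}` to the point of the core circle in its meridian half-plane stays in `Ω_{η₀}`.
-/

open Topology

section ToroidalCoordinates

def cayley (ζ : ℂ) : ℂ := (ζ + 1) / (ζ - 1)

lemma cayley_cayley {ζ : ℂ} (h : ζ ≠ 1) : cayley (cayley ζ) = ζ := by
  have h' : ζ - 1 ≠ 0 := sub_ne_zero.mpr h
  rw [cayley, cayley, div_add_one h', div_sub_one h', div_div_div_cancel_right₀ h']
  ring_nf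

lemma cayley_ne_one (ζ : ℂ) : cayley ζ ≠ 1 := by
  by_cases h : ζ = 1
  · simp [cayley, h]
  · rw [cayley, Ne, div_eq_one_iff_eq (sub_ne_zero.mpr h)]
    intro h'
    have := congrArg Complex.re h'
    simp at this
    linarith

lemma normSq_add_one_eq {ζ : ℂ} (h : ζ ≠ 1) :
    Complex.normSq (ζ + 1) = Complex.normSq (cayley ζ) * Complex.normSq (ζ - 1) := by
  rw [cayley, Complex.normSq_div, div_mul_cancel₀]
  exact (Complex.normSq_pos.mpr (sub_ne_zero.mpr h)).ne'

lemma exp_sub_mul_I_ne_one {η : ℝ} (hη : η ≠ 0) (θ : ℝ) :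
    Complex.exp (η - θ * Complex.I) ≠ 1 := by
  intro h
  have := congrArg norm h
  rw [Complex.norm_exp, norm_one, Real.exp_eq_one_iff] at this
  exact hη (by simpa using this)

lemma cayley_exp {η : ℝ} (hη : η ≠ 0) (θ : ℝ) :
    cayley (Complex.exp (η - θ * Complex.I)) =
      ⟨Real.sinh η / (Real.cosh η - Real.cos θ), Real.sin θ / (Real.cosh η - Real.cos θ)⟩ := by
  have hD : 0 < Real.cosh η - Real.cos θ := by
    linarith [Real.one_lt_cosh.mpr hη, Real.cos_le_one θ]
  rw [cayley, div_eq_iff (sub_ne_zero.mpr (exp_sub_mul_I_ne_one hη θ))]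
  have hcs := Real.cosh_sq_sub_sinh_sq η
  have hsc := Real.sin_sq_add_cos_sq θ
  apply Complex.ext <;> simp [Complex.exp_re, Complex.exp_im, ← Real.cosh_add_sinh] <;> field_simp
  · linear_combination Real.cos θ * hcs - (Real.cosh η + Real.sinh η) * hsc
  · linear_combination -Real.sin θ * hcs

def meridian (x : ℝ³) : ℂ := ⟨rhoOf x, x 0⟩

lemma d1sq_eq_normSq (x : ℝ³) : d1sq x = Complex.normSq (meridian x + 1) := by
  simp [d1sq, meridian, Complex.normSq_apply]
  ring

lemma d2sq_eq_normSq (x : ℝ³) : d2sq x = Complex.normSq (meridian x - 1) := by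
  simp [d2sq, meridian, Complex.normSq_apply]
  ring

lemma rhoOf_sq (x : ℝ³) : rhoOf x ^ 2 = x 1 ^ 2 + x 2 ^ 2 :=
  Real.sq_sqrt (by positivity)

lemma rhoOf_eq_norm (x : ℝ³) : rhoOf x = ‖(⟨x 1, x 2⟩ : ℂ)‖ := by
  rw [rhoOf, Complex.norm_def, Complex.normSq_apply]
  ring_nf

lemma meridian_torusCoords {η : ℝ} (hη : 0 < η) (θ φ : ℝ) :
    meridian (torusCoords η θ φ) = cayley (Complex.exp (η - θ * Complex.I)) := by
  have hD : 0 < Real.cosh η - Real.cos θ := by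
    linarith [Real.one_lt_cosh.mpr hη.ne', Real.cos_le_one θ]
  have hρ : rhoOf (torusCoords η θ φ) = Real.sinh η / (Real.cosh η - Real.cos θ) := by
    rw [← Real.sqrt_sq (div_pos (Real.sinh_pos_iff.mpr hη) hD).le, rhoOf]
    congr 1
    simp only [torusCoords, Matrix.cons_val_one, Matrix.cons_val_two, Matrix.cons_val_zero,
      Matrix.head_cons, Matrix.tail_cons]
    field_simp
    linear_combination Real.sin_sq_add_cos_sq φ
  rw [cayley_exp hη.ne', meridian, hρ]
  rfl

lemma eq_torusCoords_of_meridian_eq {x : ℝ³} {η θ : ℝ} (hη : 0 < η)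
    (h : meridian x = cayley (Complex.exp (η - θ * Complex.I))) :
    x = torusCoords η θ (Complex.arg ⟨x 1, x 2⟩) := by
  rw [cayley_exp hη.ne'] at h
  have hρ : rhoOf x = Real.sinh η / (Real.cosh η - Real.cos θ) := congrArg Complex.re h
  have h0 : x 0 = Real.sin θ / (Real.cosh η - Real.cos θ) := congrArg Complex.im h
  funext i
  fin_cases i
  · exact h0
  · show x 1 = _ * _ / _
    rw [mul_div_right_comm, ← hρ, rhoOf_eq_norm, Complex.norm_mul_cos_arg]
  · show x 2 = _ * _ / _
    rw [mul_div_right_comm, ← hρ, rhoOf_eq_norm, Complex.norm_mul_sin_arg]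

lemma exists_torusCoords_of_meridian_ne_one {η₀ : ℝ} (hη₀ : 0 < η₀) {x : ℝ³}
    (hx : Real.exp (2 * η₀) * Complex.normSq (meridian x - 1) < Complex.normSq (meridian x + 1))
    (hζ : meridian x ≠ 1) : ∃ η θ φ : ℝ, η₀ < η ∧ x = torusCoords η θ φ := by
  set w := cayley (meridian x) with hw
  have hw0 : w ≠ 0 := by
    refine div_ne_zero (fun h => ?_) (sub_ne_zero.mpr hζ)
    have : rhoOf x + 1 = 0 := by simpa [meridian] using congrArg Complex.re h
    linarith [show 0 ≤ rhoOf x from Real.sqrt_nonneg _]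
  have hnorm : Real.exp η₀ < ‖w‖ := by
    rw [normSq_add_one_eq hζ, ← hw] at hx
    have hlt := lt_of_mul_lt_mul_right hx (Complex.normSq_nonneg _)
    rw [Complex.normSq_eq_norm_sq, show 2 * η₀ = η₀ + η₀ by ring, Real.exp_add, ← sq] at hlt
    exact lt_of_pow_lt_pow_left₀ 2 (norm_nonneg w) hlt
  have hη : η₀ < Real.log ‖w‖ := (Real.lt_log_iff_exp_lt (norm_pos_iff.mpr hw0)).mpr hnorm
  refine ⟨Real.log ‖w‖, -Complex.arg w, _, hη, eq_torusCoords_of_meridian_eq (hη₀.trans hη) ?_⟩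
  have hlog : (Real.log ‖w‖ : ℂ) - ((-Complex.arg w : ℝ) : ℂ) * Complex.I = Complex.log w := by
    rw [Complex.log]
    push_cast
    ring
  rw [hlog, Complex.exp_log hw0, hw, cayley_cayley hζ]

lemma meridian_eq_one_iff {x : ℝ³} :
    meridian x = 1 ↔ x 0 = 0 ∧ x 1 ^ 2 + x 2 ^ 2 = 1 := by
  rw [Complex.ext_iff, ← rhoOf_sq]
  simp only [meridian, Complex.one_re, Complex.one_im, rhoOf]
  constructor
  · rintro ⟨hρ, h0⟩
    rw [hρ]
    exact ⟨h0, one_pow 2⟩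
  · rintro ⟨h0, hρ⟩
    refine ⟨?_, h0⟩
    rw [Real.sq_sqrt (by positivity)] at hρ
    rw [hρ, Real.sqrt_one]

lemma mem_torusDomain_iff {η₀ : ℝ} (hη₀ : 0 < η₀) {x : ℝ³} :
    x ∈ torusDomain η₀ ↔ Real.exp (2 * η₀) * d2sq x < d1sq x := by
  rw [d1sq_eq_normSq, d2sq_eq_normSq]
  constructor
  · rintro (⟨η, θ, φ, hη, rfl⟩ | hcore)
    · have hη' : 0 < η := hη₀.trans hη
      set w := Complex.exp (η - θ * Complex.I)
      rw [meridian_torusCoords hη', normSq_add_one_eq (cayley_ne_one w),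
        cayley_cayley (exp_sub_mul_I_ne_one hη'.ne' θ)]
      have hpos : 0 < Complex.normSq (cayley w - 1) :=
        Complex.normSq_pos.mpr (sub_ne_zero.mpr (cayley_ne_one w))
      have hnormSq : Complex.normSq w = Real.exp (2 * η) := by
        rw [Complex.normSq_eq_norm_sq, Complex.norm_exp, ← Real.exp_nat_mul]
        simp [mul_comm]
      rw [hnormSq]
      exact mul_lt_mul_of_pos_right (Real.exp_lt_exp.mpr (by linarith)) hpos
    · rw [meridian_eq_one_iff.mpr hcore]
      norm_num
  · intro hx
    by_cases hζ : meridian x = 1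
    · exact Or.inr (meridian_eq_one_iff.mp hζ)
    · exact Or.inl (exists_torusCoords_of_meridian_ne_one hη₀ hx hζ)

lemma isOpen_torusDomain {η₀ : ℝ} (hη₀ : 0 < η₀) : IsOpen (torusDomain η₀) := by
  have : torusDomain η₀ = {x | Real.exp (2 * η₀) * d2sq x < d1sq x} :=
    Set.ext fun x => mem_torusDomain_iff hη₀
  rw [this]
  exact isOpen_lt (by unfold d2sq rhoOf; fun_prop) (by unfold d1sq rhoOf; fun_prop)

end ToroidalCoordinates

section Connectedness

lemma one_lt_exp_two_mul {η₀ : ℝ} (hη₀ : 0 < η₀) : 1 < Real.exp (2 * η₀) :=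
  Real.one_lt_exp_iff.mpr (by positivity)

lemma rhoOf_eq_mul_of_eq_mul {x y : ℝ³} {c : ℝ} (hc : 0 ≤ c) (h1 : y 1 = c * x 1)
    (h2 : y 2 = c * x 2) : rhoOf y = c * rhoOf x := by
  rw [rhoOf, rhoOf, h1, h2,
    show (c * x 1) ^ 2 + (c * x 2) ^ 2 = c ^ 2 * (x 1 ^ 2 + x 2 ^ 2) by ring,
    Real.sqrt_mul (sq_nonneg c), Real.sqrt_sq hc]

lemma segment_subset_torusDomain {η₀ : ℝ} (hη₀ : 0 < η₀) {x y : ℝ³}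
    (hx : x ∈ torusDomain η₀) (hy : y ∈ torusDomain η₀) {c : ℝ} (hc : 0 ≤ c)
    (h1 : y 1 = c * x 1) (h2 : y 2 = c * x 2) : segment ℝ x y ⊆ torusDomain η₀ := by
  rintro _ ⟨a, b, ha, hb, hab, rfl⟩
  have hρ : rhoOf (a • x + b • y) = a * rhoOf x + b * rhoOf y := by
    rw [rhoOf_eq_mul_of_eq_mul (c := a + b * c) (x := x) (by positivity) (by simp [h1]; ring)
      (by simp [h2]; ring), rhoOf_eq_mul_of_eq_mul hc h1 h2]
    ring
  rw [mem_torusDomain_iff hη₀, d1sq, d2sq] at hx hy ⊢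
  rw [hρ]
  simp only [Pi.add_apply, Pi.smul_apply, smul_eq_mul]
  have hK := one_lt_exp_two_mul hη₀
  set K := Real.exp (2 * η₀)
  obtain rfl : b = 1 - a := by linarith
  -- With `Q = d₁² - K d₂²` as a function of `(x₀, ρ)`, the concavity defect
  -- `Q (a x + (1 - a) y) - a Q x - (1 - a) Q y` is the nonnegative term below.
  have hmix : 0 ≤ (K - 1) * (a * (1 - a)) *
      ((rhoOf x - rhoOf y) ^ 2 + (x 0 - y 0) ^ 2) := by
    have := mul_nonneg ha hb
    positivity
  nlinarith [mul_nonneg ha (sub_pos.mpr hx).le, mul_nonneg hb (sub_pos.mpr hy).le]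

lemma rhoOf_pos_of_mem_torusDomain {η₀ : ℝ} (hη₀ : 0 < η₀) {x : ℝ³} (hx : x ∈ torusDomain η₀) :
    0 < rhoOf x := by
  rw [mem_torusDomain_iff hη₀, d1sq, d2sq] at hx
  by_contra! hρ
  have hρ0 : rhoOf x = 0 := le_antisymm hρ (Real.sqrt_nonneg _)
  rw [hρ0] at hx
  nlinarith [one_lt_exp_two_mul hη₀, sq_nonneg (x 0)]

lemma isPreconnected_torusDomain {η₀ : ℝ} (hη₀ : 0 < η₀) : IsPreconnected (torusDomain η₀) := by
  set circle := Set.range fun t : ℝ => (![0, Real.cos t, Real.sin t] : ℝ³)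
  have hcircle : circle ⊆ torusDomain η₀ := by
    rintro _ ⟨t, rfl⟩
    exact Or.inr ⟨rfl, by simp [Real.cos_sq_add_sin_sq]⟩
  refine isPreconnected_of_forall ![0, 1, 0] fun y hy => ?_
  have hρ := rhoOf_pos_of_mem_torusDomain hη₀ hy
  set p : ℝ³ := ![0, (rhoOf y)⁻¹ * y 1, (rhoOf y)⁻¹ * y 2]
  have hp : p ∈ circle := by
    refine ⟨Complex.arg ⟨y 1, y 2⟩, ?_⟩
    funext i
    fin_cases i
    · rfl
    · exact (eq_inv_mul_iff_mul_eq₀ hρ.ne').mpr (rhoOf_eq_norm y ▸ Complex.norm_mul_cos_arg _)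
    · exact (eq_inv_mul_iff_mul_eq₀ hρ.ne').mpr (rhoOf_eq_norm y ▸ Complex.norm_mul_sin_arg _)
  refine ⟨segment ℝ y p ∪ circle, Set.union_subset ?_ hcircle,
    Or.inr ⟨0, by simp⟩, Or.inl (left_mem_segment ℝ y p), ?_⟩
  · exact segment_subset_torusDomain hη₀ hy (hcircle hp) (inv_nonneg.mpr hρ.le) rfl rfl
  · exact (convex_segment y p).isPreconnected.union p (right_mem_segment ℝ y p) hp
      (isPreconnected_range (by fun_prop))

lemma proj_mem_torusDomain {η₀ : ℝ} (hη₀ : 0 < η₀) {x : ℝ³} (hx : x ∈ torusDomain η₀) :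
    (![0, x 1, x 2] : ℝ³) ∈ torusDomain η₀ := by
  rw [mem_torusDomain_iff hη₀, d1sq, d2sq] at hx ⊢
  have hρ : rhoOf ![0, x 1, x 2] = rhoOf x := rfl
  rw [hρ, Matrix.cons_val_zero]
  nlinarith [one_lt_exp_two_mul hη₀, sq_nonneg (x 0)]

lemma mem_torusDomain_of_mem_annulusD {η₀ : ℝ} (hη₀ : 0 < η₀) {z : ℂ} (hz : z ∈ annulusD η₀) :
    (![0, z.re, z.im] : ℝ³) ∈ torusDomain η₀ := by
  obtain ⟨hlo, hhi⟩ := hz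
  have hc : 1 < Real.cosh η₀ := Real.one_lt_cosh.mpr hη₀.ne'
  rw [div_lt_iff₀ (by linarith)] at hlo
  rw [lt_div_iff₀ (by linarith)] at hhi
  have hρ : rhoOf ![0, z.re, z.im] = ‖z‖ := rhoOf_eq_norm _
  have hexp : Real.exp (2 * η₀) = (Real.cosh η₀ + Real.sinh η₀) ^ 2 := by
    rw [Real.cosh_add_sinh, ← Real.exp_nat_mul]
    ring_nf
  rw [mem_torusDomain_iff hη₀, d1sq, d2sq, hρ, hexp]
  simp only [Matrix.cons_val_zero]
  have hpyth := Real.cosh_sq_sub_sinh_sq η₀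
  have hs : 0 < Real.sinh η₀ := Real.sinh_pos_iff.mpr hη₀
  set c := Real.cosh η₀
  set s := Real.sinh η₀
  set r := ‖z‖
  have hA : 0 < (r + 1) + (c + s) * (r - 1) := by
    nlinarith [mul_pos (show 0 < 1 + c + s by linarith) (show 0 < r * (c + 1) - s by linarith)]
  have hB : 0 < (r + 1) - (c + s) * (r - 1) := by
    nlinarith [mul_pos (show 0 < 1 + c + s by linarith) (show 0 < s - r * (c - 1) by linarith)]
  -- `(r + 1)² - (c + s)² (r - 1)²` is the product of these two factors
  nlinarith [mul_pos hA hB]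

end Connectedness

section PartialDerivatives

lemma eq_of_fderiv_apply_sub_eq_zero {E F : Type*} [NormedAddCommGroup E] [NormedSpace ℝ E]
    [NormedAddCommGroup F] [NormedSpace ℝ F] {g : E → F} {x y : E}
    (hg : ∀ z ∈ segment ℝ x y, DifferentiableAt ℝ g z)
    (h : ∀ z ∈ segment ℝ x y, fderiv ℝ g z (y - x) = 0) : g x = g y := by
  have hmem : ∀ t ∈ Set.Icc (0 : ℝ) 1, AffineMap.lineMap x y t ∈ segment ℝ x y := fun t ht =>
    segment_eq_image_lineMap ℝ x y ▸ Set.mem_image_of_mem _ ht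
  have hderiv : ∀ t ∈ Set.Icc (0 : ℝ) 1,
      HasDerivWithinAt (g ∘ AffineMap.lineMap x y) 0 (Set.Icc 0 1) t := by
    intro t ht
    have := (hg _ (hmem t ht)).hasFDerivAt.comp_hasDerivAt t AffineMap.hasDerivAt_lineMap
    rw [h _ (hmem t ht)] at this
    exact this.hasDerivWithinAt
  have := (convex_Icc (0 : ℝ) 1).norm_image_sub_le_of_norm_hasDerivWithin_le hderiv
    (fun _ _ => le_of_eq norm_zero) (Set.left_mem_Icc.mpr zero_le_one)
    (Set.right_mem_Icc.mpr zero_le_one)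
  simpa [sub_eq_zero, eq_comm] using this

lemma pdf_comp_linearMap {E F : Type*} [NormedAddCommGroup E] [NormedSpace ℝ E]
    [FiniteDimensional ℝ E] [NormedAddCommGroup F] [NormedSpace ℝ F] (L : E →ₗ[ℝ] F)
    {g : ℝ³ → E} {x : ℝ³} (hg : DifferentiableAt ℝ g x) (i : Fin 3) :
    pdf i (L ∘ g) x = L (pdf i g x) := by
  have h := (L.toContinuousLinearMap.hasFDerivAt.comp x hg.hasFDerivAt).fderiv
  rw [LinearMap.coe_toContinuousLinearMap'] at h
  rw [pdf, pdf, h]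
  rfl

lemma fderiv_eq_zero_of_pdf_eq_zero {F : Type*} [NormedAddCommGroup F] [NormedSpace ℝ F]
    {g : ℝ³ → F} {x : ℝ³} (h : ∀ i, pdf i g x = 0) : fderiv ℝ g x = 0 := by
  refine ContinuousLinearMap.coe_injective (LinearMap.pi_ext fun i c => ?_)
  rw [show (Pi.single i c : ℝ³) = c • Pi.single i 1 by ext j; simp [Pi.single_apply]]
  have hi : fderiv ℝ g x (Pi.single i 1) = 0 := h i
  simp [hi]

lemma apply_eq_apply_proj_of_pdf_zero {η₀ : ℝ} (hη₀ : 0 < η₀) {E : Type*} [NormedAddCommGroup E]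
    [NormedSpace ℝ E] {g : ℝ³ → E} (hg : ∀ y ∈ torusDomain η₀, DifferentiableAt ℝ g y)
    (h0 : ∀ y ∈ torusDomain η₀, pdf 0 g y = 0) {x : ℝ³} (hx : x ∈ torusDomain η₀) :
    g x = g ![0, x 1, x 2] := by
  have hseg := segment_subset_torusDomain hη₀ hx (proj_mem_torusDomain hη₀ hx) zero_le_one
    (one_mul _).symm (one_mul _).symm
  refine eq_of_fderiv_apply_sub_eq_zero (fun z hz => hg z (hseg hz)) fun z hz => ?_
  have hdir : (![0, x 1, x 2] : ℝ³) - x = -x 0 • Pi.single 0 1 := by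
    funext i
    fin_cases i <;> simp
  rw [hdir, map_smul]
  exact smul_eq_zero_of_right _ (h0 z (hseg hz))

end PartialDerivatives

section MonogenicConstants

lemma e1_mul_add_e2_mul_eq_zero {p q : ℍ[ℝ]} (hp : p.imK = 0) (hq : q.imK = 0)
    (h : e1 * p + e2 * q = 0) : p.re = 0 ∧ q.re = 0 ∧ p.imI = -q.imJ ∧ p.imJ = q.imI := by
  obtain ⟨h0, h1, h2, h3⟩ := QuaternionAlgebra.ext_iff.mp h
  simp only [Quaternion.re_add, Quaternion.imI_add, Quaternion.imJ_add, Quaternion.imK_add,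
    Quaternion.re_mul, Quaternion.imI_mul, Quaternion.imJ_mul, Quaternion.imK_mul] at h0 h1 h2 h3
  simp [e1, e2] at h0 h1 h2 h3
  refine ⟨?_, ?_, ?_, ?_⟩ <;> linarith

variable {f : ℝ³ → ℍ[ℝ]} {x : ℝ³}

lemma pdf_zero_eq_zero_of_CRbar_of_CRconj (h1 : CRbar f x = 0) (h2 : CRconj f x = 0) :
    pdf 0 f x = 0 := by
  have h : (2 : ℝ) • pdf 0 f x = CRbar f x + CRconj f x := by
    rw [CRbar, CRconj, two_smul]
    abel
  rw [h1, h2, add_zero] at h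
  exact (smul_eq_zero.mp h).resolve_left two_ne_zero

lemma imK_pdf_eq_zero (hf : DifferentiableAt ℝ f x) (hK : ∀ᶠ y in 𝓝 x, (f y).imK = 0)
    (i : Fin 3) : (pdf i f x).imK = 0 := by
  calc (pdf i f x).imK = pdf i (fun y => (f y).imK) x :=
        (pdf_comp_linearMap (QuaternionAlgebra.imKₗ _ _ _) hf i).symm
    _ = 0 := by
      rw [pdf, Filter.EventuallyEq.fderiv_eq
        (show (fun y => (f y).imK) =ᶠ[𝓝 x] fun _ => (0 : ℝ) from hK)]
      simp

lemma pdf_one_two_of_CRbar_of_CRconj (hf : DifferentiableAt ℝ f x)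
    (hK : ∀ᶠ y in 𝓝 x, (f y).imK = 0) (h1 : CRbar f x = 0) (h2 : CRconj f x = 0) :
    (pdf 1 f x).re = 0 ∧ (pdf 2 f x).re = 0 ∧
      (pdf 1 f x).imI = -(pdf 2 f x).imJ ∧ (pdf 1 f x).imJ = (pdf 2 f x).imI := by
  refine e1_mul_add_e2_mul_eq_zero (imK_pdf_eq_zero hf hK 1) (imK_pdf_eq_zero hf hK 2) ?_
  rw [← h1, CRbar, pdf_zero_eq_zero_of_CRbar_of_CRconj h1 h2, zero_add]

lemma fderiv_re_eq_zero (hf : DifferentiableAt ℝ f x) (hK : ∀ᶠ y in 𝓝 x, (f y).imK = 0)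
    (h1 : CRbar f x = 0) (h2 : CRconj f x = 0) : fderiv ℝ (fun y => (f y).re) x = 0 := by
  obtain ⟨hre1, hre2, -, -⟩ := pdf_one_two_of_CRbar_of_CRconj hf hK h1 h2
  refine fderiv_eq_zero_of_pdf_eq_zero fun i => ?_
  have h : pdf i (fun y => (f y).re) x = (pdf i f x).re := by
    exact pdf_comp_linearMap (QuaternionAlgebra.reₗ _ _ _) hf i
  rw [h]
  fin_cases i
  · simp [pdf_zero_eq_zero_of_CRbar_of_CRconj h1 h2]
  · exact hre1
  · exact hre2

end MonogenicConstants

section Holomorphy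

def planeEmbedding : ℂ →L[ℝ] ℝ³ := ContinuousLinearMap.pi ![0, Complex.reCLM, Complex.imCLM]

lemma planeEmbedding_apply (z : ℂ) : planeEmbedding z = ![0, z.re, z.im] := by
  funext i
  fin_cases i <;> rfl

def toComplexIJ : ℍ[ℝ] →ₗ[ℝ] ℂ where
  toFun q := ⟨q.imI, -q.imJ⟩
  map_add' p q := by apply Complex.ext <;> simp; ring
  map_smul' c q := by apply Complex.ext <;> simp

lemma differentiableAt_complex_of_hasFDerivAt {g : ℂ → ℂ} {L : ℂ →L[ℝ] ℂ} {z : ℂ}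
    (hg : HasFDerivAt g L z) (hL : L Complex.I = Complex.I * L 1) :
    DifferentiableAt ℂ g z := by
  refine (hasFDerivAt_of_restrictScalars ℝ (f' := L 1 • ContinuousLinearMap.id ℂ ℂ) hg
    (ContinuousLinearMap.ext fun w => ?_)).differentiableAt
  have hw : w = w.re • (1 : ℂ) + w.im • Complex.I := by simp
  conv_rhs => rw [hw]
  rw [map_add, map_smul, map_smul, hL]
  conv_lhs => rw [hw]
  simp only [ContinuousLinearMap.coe_restrictScalars', smul_apply, ContinuousLinearMap.id_apply,
    Complex.real_smul, smul_eq_mul]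
  ring

variable {f : ℝ³ → ℍ[ℝ]} {z : ℂ}

lemma differentiableAt_toComplexIJ_comp (hf : DifferentiableAt ℝ f (planeEmbedding z))
    (hK : ∀ᶠ y in 𝓝 (planeEmbedding z), (f y).imK = 0) (h1 : CRbar f (planeEmbedding z) = 0)
    (h2 : CRconj f (planeEmbedding z) = 0) :
    DifferentiableAt ℂ (fun w => toComplexIJ (f (planeEmbedding w))) z := by
  obtain ⟨-, -, hI, hJ⟩ := pdf_one_two_of_CRbar_of_CRconj hf hK h1 h2
  refine differentiableAt_complex_of_hasFDerivAt
    ((toComplexIJ.toContinuousLinearMap.hasFDerivAt.comp _ hf.hasFDerivAt).comp z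
      planeEmbedding.hasFDerivAt) ?_
  have he1 : planeEmbedding 1 = Pi.single 1 1 := by
    rw [planeEmbedding_apply]; funext i; fin_cases i <;> simp
  have he2 : planeEmbedding Complex.I = Pi.single 2 1 := by
    rw [planeEmbedding_apply]; funext i; fin_cases i <;> simp
  simp only [ContinuousLinearMap.comp_apply, he1, he2]
  simp only [pdf] at hI hJ
  apply Complex.ext <;> simp [toComplexIJ] <;> linarith

end Holomorphy

/-- structure of 𝒜-valued monogenic constants on the solid torus Ω_{η₀}. -/
theorem stmt_1 (η₀ : ℝ) (hη : 0 < η₀) (f : ℝ³ → ℍ[ℝ])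
    (hC1 : ∀ x ∈ torusDomain η₀, ContDiffAt ℝ 1 f x)
    (hA : ∀ x ∈ torusDomain η₀, (f x).imK = 0)
    (h1 : ∀ x ∈ torusDomain η₀, CRbar f x = 0)
    (h2 : ∀ x ∈ torusDomain η₀, CRconj f x = 0) :
    (∀ x ∈ torusDomain η₀, ∀ y ∈ torusDomain η₀, (f x).re = (f y).re) ∧
    (∀ x ∈ torusDomain η₀,
      pdf 0 (fun y => (f y).imI) x = 0 ∧ pdf 0 (fun y => (f y).imJ) x = 0) ∧
    (∃ F : ℂ → ℂ, DifferentiableOn ℂ F (annulusD η₀) ∧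
      ∀ x ∈ torusDomain η₀,
        ((f x).imI : ℂ) - ((f x).imJ : ℂ) * Complex.I = F ⟨x 1, x 2⟩) := by
  have hopen := isOpen_torusDomain hη
  have hd : ∀ x ∈ torusDomain η₀, DifferentiableAt ℝ f x := fun x hx =>
    (hC1 x hx).differentiableAt one_ne_zero
  have hK : ∀ x ∈ torusDomain η₀, ∀ᶠ y in 𝓝 x, (f y).imK = 0 := fun x hx =>
    Filter.eventually_of_mem (hopen.mem_nhds hx) hA
  have h0 : ∀ x ∈ torusDomain η₀, pdf 0 f x = 0 := fun x hx =>
    pdf_zero_eq_zero_of_CRbar_of_CRconj (h1 x hx) (h2 x hx)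
  have h0L : ∀ L : ℍ[ℝ] →ₗ[ℝ] ℝ, ∀ x ∈ torusDomain η₀, pdf 0 (L ∘ f) x = 0 := fun L x hx => by
    rw [pdf_comp_linearMap L (hd x hx), h0 x hx, map_zero]
  refine ⟨fun x hx y hy => ?_, fun x hx => ⟨h0L (QuaternionAlgebra.imIₗ _ _ _) x hx,
    h0L (QuaternionAlgebra.imJₗ _ _ _) x hx⟩, fun z => toComplexIJ (f (planeEmbedding z)),
    fun z hz => ?_, fun x hx => ?_⟩
  · exact hopen.is_const_of_fderiv_eq_zero (isPreconnected_torusDomain hη)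
      (fun y hy => ((QuaternionAlgebra.reₗ _ _ _).toContinuousLinearMap.differentiableAt.comp y
        (hd y hy)).differentiableWithinAt)
      (fun y hy => fderiv_re_eq_zero (hd y hy) (hK y hy) (h1 y hy) (h2 y hy)) hx hy
  · have hz' : planeEmbedding z ∈ torusDomain η₀ :=
      planeEmbedding_apply z ▸ mem_torusDomain_of_mem_annulusD hη hz
    exact (differentiableAt_toComplexIJ_comp (hd _ hz') (hK _ hz') (h1 _ hz')
      (h2 _ hz')).differentiableWithinAt
  · have hproj : f (planeEmbedding ⟨x 1, x 2⟩) = f x := by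
      rw [planeEmbedding_apply]
      exact (apply_eq_apply_proj_of_pdf_zero hη hd h0 hx).symm
    apply Complex.ext <;> simp [hproj, toComplexIJ]

end Toro
end
end

section
/- Let Ω ⊆ ℝ³ be open and let f = f₀ + f₁e₁ + f₂e₂ : Ω → 𝒜 be a continuously differentiable monogenic function whose scalar component f₀ is constant on Ω. Then ∂f = 0 on Ω, i.e. f is a monogenic constant. -/
open MeasureTheory Filter Quaternion

noncomputable section

namespace Toro

/-!
Since `f₀` is locally constant and `f₃ = 0`, every partial derivative `∂ᵢf` is a combination of
`e₁` and `e₂`. Left multiplication by `e₁` or `e₂` sends such a quaternion to a combination of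
`1` and `e₃`, so the `e₁`, `e₂` components of `∂̄f = 0` say exactly that `∂₀f = 0`. As
`∂f = 2∂₀f − ∂̄f`, it follows that `∂f = 0`.
-/

theorem fderiv_apply_eq_zero_of_comp_eventuallyEq_const {𝕜 E F G : Type*}
    [NontriviallyNormedField 𝕜] [NormedAddCommGroup E] [NormedSpace 𝕜 E]
    [NormedAddCommGroup F] [NormedSpace 𝕜 F] [NormedAddCommGroup G] [NormedSpace 𝕜 G]
    {f : E → F} {x : E} (g : F →L[𝕜] G) (c : G) (hf : DifferentiableAt 𝕜 f x)
    (h : (fun y => g (f y)) =ᶠ[nhds x] fun _ => c) (v : E) :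
    g (fderiv 𝕜 f x v) = 0 := by
  have hcomp : HasFDerivAt (fun _ => c) (g.comp (fderiv 𝕜 f x)) x :=
    (g.hasFDerivAt.comp x hf.hasFDerivAt).congr_of_eventuallyEq h.symm
  exact DFunLike.congr_fun (hcomp.unique (hasFDerivAt_const c x)) v

theorem CRconj_eq_two_smul_pdf_zero_sub_CRbar (f : ℝ³ → ℍ[ℝ]) (x : ℝ³) :
    CRconj f x = (2 : ℝ) • pdf 0 f x - CRbar f x := by
  simp only [CRconj, CRbar, two_smul]
  abel

@[simp] theorem imI_e1_mul (q : ℍ[ℝ]) : (e1 * q).imI = q.re := by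
  rw [Quaternion.imI_mul]; simp [e1]

@[simp] theorem imJ_e1_mul (q : ℍ[ℝ]) : (e1 * q).imJ = -q.imK := by
  rw [Quaternion.imJ_mul]; simp [e1]

@[simp] theorem imI_e2_mul (q : ℍ[ℝ]) : (e2 * q).imI = q.imK := by
  rw [Quaternion.imI_mul]; simp [e2]

@[simp] theorem imJ_e2_mul (q : ℍ[ℝ]) : (e2 * q).imJ = q.re := by
  rw [Quaternion.imJ_mul]; simp [e2]

theorem pdf_zero_eq_zero_of_CRbar_eq_zero {f : ℝ³ → ℍ[ℝ]} {x : ℝ³}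
    (hre : ∀ i, (pdf i f x).re = 0) (himK : ∀ i, (pdf i f x).imK = 0) (h : CRbar f x = 0) :
    pdf 0 f x = 0 := by
  have hI := congrArg QuaternionAlgebra.imI h
  have hJ := congrArg QuaternionAlgebra.imJ h
  simp only [CRbar, Quaternion.imI_add, Quaternion.imJ_add, imI_e1_mul, imJ_e1_mul, imI_e2_mul,
    imJ_e2_mul, hre, himK, Quaternion.imI_zero, Quaternion.imJ_zero, add_zero, neg_zero] at hI hJ
  ext
  · exact hre 0
  · exact hI
  · exact hJ
  · exact himK 0

/-- an 𝒜-valued monogenic function with constant scalar part is a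
monogenic constant. -/
theorem stmt_2 (Ω : Set ℝ³) (hΩ : IsOpen Ω) (f : ℝ³ → ℍ[ℝ])
    (hC1 : ∀ x ∈ Ω, ContDiffAt ℝ 1 f x)
    (hA : ∀ x ∈ Ω, (f x).imK = 0)
    (hmono : ∀ x ∈ Ω, CRbar f x = 0)
    (hconst : ∀ x ∈ Ω, ∀ y ∈ Ω, (f x).re = (f y).re) :
    ∀ x ∈ Ω, CRconj f x = 0 := by
  intro x hx
  have hf : DifferentiableAt ℝ f x := (hC1 x hx).differentiableAt one_ne_zero
  have hΩx : Ω ∈ nhds x := hΩ.mem_nhds hx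
  have hre : ∀ i, (pdf i f x).re = 0 := fun i =>
    fderiv_apply_eq_zero_of_comp_eventuallyEq_const
      (LinearMap.toContinuousLinearMap (E := ℍ[ℝ]) (QuaternionAlgebra.reₗ _ _ _)) (f x).re hf
      (eventually_of_mem hΩx fun y hy => hconst y hy x hx) _
  have himK : ∀ i, (pdf i f x).imK = 0 := fun i =>
    fderiv_apply_eq_zero_of_comp_eventuallyEq_const
      (LinearMap.toContinuousLinearMap (E := ℍ[ℝ]) (QuaternionAlgebra.imKₗ _ _ _)) 0 hf
      (eventually_of_mem hΩx hA) _
  have hpdf0 : pdf 0 f x = 0 := pdf_zero_eq_zero_of_CRbar_eq_zero hre himK (hmono x hx)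
  rw [CRconj_eq_two_smul_pdf_zero_sub_CRbar, hpdf0, hmono x hx, smul_zero, sub_zero]

end Toro
end
end

section
/- Let γ(t) = (0, cos t, sin t), t ∈ [0, 2π]. Then: (i) for every m ∈ ℤ, ∫₀^{2π} ω_{W_m^+}(γ(t))(γ′(t)) dt = 0, and for every m ∈ ℤ with m ≠ −1, ∫₀^{2π} ω_{W_m^−}(γ(t))(γ′(t)) dt = 0; (ii) ∫₀^{2π} ω_{W_{−1}^−}(γ(t))(γ′(t)) dt ≠ 0; (iii) consequently, for any η₀ > 0 there exists no differentiable real-valued function h on Ω_{η₀} with ∂h = W_{−1}^− on Ω_{η₀}; (iv) nevertheless, on {x ∈ ℝ³ : x₁ > 0} one has W_{−1}^− = −∂(arctan(x₂/x₁)). Here, for a real-valued function h, ∂h = ∂₀h − ∂₁h e₁ − ∂₂h e₂. -/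
/-!
For real-valued `h` the form `ω_{∂h}` is the differential `dh`, so it integrates to zero along
every closed curve on which `h` is differentiable. Along `γ(t) = (0, cos t, sin t)` de Moivre's
formula gives `ω_{W_m^+} = sin ((m+1) t)` and `ω_{W_m^-} = -cos ((m+1) t)`, which integrate to zero
over a period except for `ω_{W_{-1}^-} ≡ -1`. Since `γ` lies in every solid torus `Ω_{η₀}`, the
integral `-2π` rules out a primitive there, although on `{x₁ ≠ 0}` the negated angle `-arctan (x₂/x₁)` is one.
-/

open MeasureTheory Filter Quaternion

noncomputable section

namespace Toro

lemma hasDerivAt_circ (t : ℝ) : HasDerivAt circ ![0, -Real.sin t, Real.cos t] t := by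
  rw [hasDerivAt_pi]
  intro i
  fin_cases i
  · simpa [circ] using hasDerivAt_const t (0 : ℝ)
  · simpa [circ] using Real.hasDerivAt_cos t
  · simpa [circ] using Real.hasDerivAt_sin t

lemma deriv_circ (t : ℝ) : deriv circ t = ![0, -Real.sin t, Real.cos t] :=
  (hasDerivAt_circ t).deriv

lemma circ_two_pi : circ (2 * Real.pi) = circ 0 := by
  simp [circ]

lemma circ_mem_torusDomain (η₀ t : ℝ) : circ t ∈ torusDomain η₀ :=
  Or.inr ⟨rfl, by simp [circ, Real.cos_sq_add_sin_sq]⟩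

lemma cos_add_sin_I_zpow (m : ℤ) (t : ℝ) :
    (⟨Real.cos t, Real.sin t⟩ : ℂ) ^ m = ⟨Real.cos (m * t), Real.sin (m * t)⟩ := by
  have cis : ∀ s : ℝ, (⟨Real.cos s, Real.sin s⟩ : ℂ) = Complex.exp (s * Complex.I) := by
    intro s
    apply Complex.ext <;> simp
  rw [cis, ← Complex.exp_int_mul, cis]
  push_cast
  ring_nf

lemma Jp_circ (m : ℤ) (t : ℝ) : Jp m (circ t) = Real.cos (m * t) := by
  simp [Jp, circ, cos_add_sin_I_zpow]

lemma Jm_circ (m : ℤ) (t : ℝ) : Jm m (circ t) = Real.sin (m * t) := by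
  simp [Jm, circ, cos_add_sin_I_zpow]

lemma omegaF_Wp_circ (m : ℤ) (t : ℝ) :
    omegaF (Wp m) (circ t) (deriv circ t) = Real.sin ((m + 1 : ℤ) * t) := by
  simp only [omegaF, Wp, Jp_circ, Jm_circ, deriv_circ, Matrix.cons_val_zero, Matrix.cons_val_one,
    Matrix.cons_val_two, Matrix.head_cons, Matrix.tail_cons, Int.cast_add, Int.cast_one, add_mul,
    one_mul, Real.sin_add]
  ring

lemma omegaF_Wn_circ (m : ℤ) (t : ℝ) :
    omegaF (Wn m) (circ t) (deriv circ t) = -Real.cos ((m + 1 : ℤ) * t) := by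
  simp only [omegaF, Wn, Jp_circ, Jm_circ, deriv_circ, Matrix.cons_val_zero, Matrix.cons_val_one,
    Matrix.cons_val_two, Matrix.head_cons, Matrix.tail_cons, Int.cast_add, Int.cast_one, add_mul,
    one_mul, Real.cos_add]
  ring

lemma integral_sin_int_mul (k : ℤ) : ∫ t in (0 : ℝ)..(2 * Real.pi), Real.sin (k * t) = 0 := by
  rcases eq_or_ne k 0 with rfl | hk
  · simp
  · rw [intervalIntegral.integral_comp_mul_left _ (Int.cast_ne_zero.mpr hk)]
    simp [Real.cos_int_mul_two_pi]

lemma integral_cos_int_mul {k : ℤ} (hk : k ≠ 0) :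
    ∫ t in (0 : ℝ)..(2 * Real.pi), Real.cos (k * t) = 0 := by
  rw [intervalIntegral.integral_comp_mul_left _ (Int.cast_ne_zero.mpr hk)]
  have : Real.sin (k * (2 * Real.pi)) = 0 := by
    simpa [mul_assoc] using Real.sin_int_mul_pi (k * 2)
  simp [this]

lemma integral_omegaF_Wn_neg_one_circ :
    ∫ t in (0 : ℝ)..(2 * Real.pi), omegaF (Wn (-1)) (circ t) (deriv circ t) = -(2 * Real.pi) := by
  simp [omegaF_Wn_circ]

lemma omegaF_gradQ (h : ℝ³ → ℝ) (x v : ℝ³) : omegaF (gradQ h) x v = fderiv ℝ h x v := by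
  conv_rhs => rw [pi_eq_sum_univ' v]
  simp only [Fin.sum_univ_three, map_add, map_smul, smul_eq_mul, omegaF, gradQ, pdf]
  ring

theorem integral_omegaF_eq_zero_of_eq_gradQ {f : ℝ³ → ℍ[ℝ]} {h : ℝ³ → ℝ} {γ γ' : ℝ → ℝ³}
    {a b : ℝ} (hγ : ∀ t ∈ Set.uIcc a b, HasDerivAt γ (γ' t) t)
    (hh : ∀ t ∈ Set.uIcc a b, DifferentiableAt ℝ h (γ t))
    (hf : ∀ t ∈ Set.uIcc a b, f (γ t) = gradQ h (γ t))
    (hint : IntervalIntegrable (fun t => omegaF f (γ t) (γ' t)) volume a b)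
    (hclosed : γ a = γ b) :
    ∫ t in a..b, omegaF f (γ t) (γ' t) = 0 := by
  have hderiv : ∀ t ∈ Set.uIcc a b, HasDerivAt (h ∘ γ) (omegaF f (γ t) (γ' t)) t := by
    intro t ht
    have hω : omegaF f (γ t) (γ' t) = omegaF (gradQ h) (γ t) (γ' t) := by
      simp only [omegaF, hf t ht]
    rw [hω, omegaF_gradQ]
    exact (hh t ht).hasFDerivAt.comp_hasDerivAt t (hγ t ht)
  rw [intervalIntegral.integral_eq_sub_of_hasDerivAt hderiv hint, Function.comp_apply,
    Function.comp_apply, hclosed, sub_self]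

lemma Jp_neg_one (x : ℝ³) : Jp (-1) x = x 1 / (x 1 ^ 2 + x 2 ^ 2) := by
  simp [Jp, Complex.inv_re, Complex.normSq_mk, sq]

lemma Jm_neg_one (x : ℝ³) : Jm (-1) x = -x 2 / (x 1 ^ 2 + x 2 ^ 2) := by
  simp [Jm, Complex.inv_im, Complex.normSq_mk, sq, neg_div]

lemma hasFDerivAt_arctan_div {x : ℝ³} (hx : x 1 ≠ 0) :
    HasFDerivAt (fun y : ℝ³ => Real.arctan (y 2 / y 1))
      ((x 1 ^ 2 + x 2 ^ 2)⁻¹ • (x 1 • (ContinuousLinearMap.proj 2 : ℝ³ →L[ℝ] ℝ) -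
        x 2 • (ContinuousLinearMap.proj 1 : ℝ³ →L[ℝ] ℝ))) x := by
  have hcoord (i : Fin 3) : HasFDerivAt (fun y : ℝ³ => y i) (ContinuousLinearMap.proj i) x :=
    (ContinuousLinearMap.proj i : ℝ³ →L[ℝ] ℝ).hasFDerivAt
  have hdiv := (hcoord 2).mul ((hasDerivAt_inv hx).comp_hasFDerivAt x (hcoord 1))
  refine ((Real.hasDerivAt_arctan _).comp_hasFDerivAt x hdiv).congr_fderiv ?_
  ext v
  simp only [Pi.mul_apply, Function.comp_apply, smul_add, add_apply, smul_apply, sub_apply,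
    ContinuousLinearMap.proj_apply, smul_eq_mul]
  field_simp
  ring

theorem Wn_neg_one_eq_neg_gradQ_arctan {x : ℝ³} (hx : x 1 ≠ 0) :
    Wn (-1) x = -gradQ (fun y => Real.arctan (y 2 / y 1)) x := by
  have hpdf (i : Fin 3) : pdf i (fun y : ℝ³ => Real.arctan (y 2 / y 1)) x =
      (x 1 ^ 2 + x 2 ^ 2)⁻¹ * (x 1 * (Pi.single i 1 : ℝ³) 2 - x 2 * (Pi.single i 1 : ℝ³) 1) := by
    simp [pdf, (hasFDerivAt_arctan_div hx).fderiv]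
  show (⟨0, Jm (-1) x, Jp (-1) x, 0⟩ : ℍ[ℝ]) = -⟨pdf 0 _ x, -(pdf 1 _ x), -(pdf 2 _ x), 0⟩
  rw [QuaternionAlgebra.neg_mk, hpdf, hpdf, hpdf, Jm_neg_one, Jp_neg_one]
  congr 1 <;> simp [div_eq_inv_mul]

theorem not_exists_gradQ_eq_Wn_neg_one (η₀ : ℝ) :
    ¬∃ h : ℝ³ → ℝ, (∀ x ∈ torusDomain η₀, DifferentiableAt ℝ h x) ∧
      (∀ x ∈ torusDomain η₀, gradQ h x = Wn (-1) x) := by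
  rintro ⟨h, hdiff, hgrad⟩
  have hzero := integral_omegaF_eq_zero_of_eq_gradQ (f := Wn (-1)) (h := h)
    (fun t _ => (hasDerivAt_circ t).differentiableAt.hasDerivAt)
    (fun t _ => hdiff _ (circ_mem_torusDomain η₀ t))
    (fun t _ => (hgrad _ (circ_mem_torusDomain η₀ t)).symm)
    (by simp only [omegaF_Wn_circ]; exact (by fun_prop : Continuous _).intervalIntegrable _ _)
    circ_two_pi.symm
  rw [integral_omegaF_Wn_neg_one_circ] at hzero
  linarith [Real.pi_pos]

/-- cohomology integrals of the basic monogenic constants along the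
unit circle γ(t) = (0, cos t, sin t); W_{−1}^− is not of the form ∂h on any Ω_{η₀},
yet W_{−1}^− = −∂ arctan(x₂/x₁) on {x₁ > 0}. -/
theorem stmt_4 :
    (∀ m : ℤ,
      (∫ t in (0 : ℝ)..(2 * Real.pi), omegaF (Wp m) (circ t) (deriv circ t)) = 0) ∧
    (∀ m : ℤ, m ≠ -1 →
      (∫ t in (0 : ℝ)..(2 * Real.pi), omegaF (Wn m) (circ t) (deriv circ t)) = 0) ∧
    (∫ t in (0 : ℝ)..(2 * Real.pi), omegaF (Wn (-1)) (circ t) (deriv circ t)) ≠ 0 ∧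
    (∀ η₀ : ℝ, 0 < η₀ → ¬∃ h : ℝ³ → ℝ,
      (∀ x ∈ torusDomain η₀, DifferentiableAt ℝ h x) ∧
      (∀ x ∈ torusDomain η₀, gradQ h x = Wn (-1) x)) ∧
    (∀ x : ℝ³, 0 < x 1 →
      Wn (-1) x = -gradQ (fun y => Real.arctan (y 2 / y 1)) x) := by
  refine ⟨fun m => ?_, fun m hm => ?_, ?_, fun η₀ _ => not_exists_gradQ_eq_Wn_neg_one η₀,
    fun x hx => Wn_neg_one_eq_neg_gradQ_arctan hx.ne'⟩
  · simp only [omegaF_Wp_circ, integral_sin_int_mul]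
  · simp only [omegaF_Wn_circ, intervalIntegral.integral_neg,
      integral_cos_int_mul (show m + 1 ≠ 0 by omega), neg_zero]
  · rw [integral_omegaF_Wn_neg_one_circ]
    exact neg_ne_zero.mpr Real.two_pi_pos.ne'

end Toro
end
end
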